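/- Define erf(t) = (2/√π)·∫₀ᵗ e^{−x²} dx, let c = √(π/2)·e^{1/2} (so that c·√(2/π)·e^{−1/2} = 1) and k = 1 − c·erf(1/√2). Then the functions u(t) = √(2/π)·c·e^{−(t+1)²/2} + c·t·erf((t+1)/√2) + k·t and v(t) = c·erf((t+1)/√2) + k are differentiable on ℝ and satisfy u'(t) = −u(t) + (t+1)·v(t) and v'(t) = u(t) − t·v(t) for all t ∈ ℝ, together with the initial conditions u(0) = 1 and v(0) = 1. -/

import Mathlib

/-!
With `G t = √(2/π) e^{-(t+1)²/2}` one has `G' = -(t+1) G` and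
`d/dt erf((t+1)/√2) = G`, so `v' = c G`. Since `u = c G + t v`, this gives
`v' = u - t v` and `u' = -c G + v = -u + (t+1) v`.
-/

noncomputable def erf (t : ℝ) : ℝ :=
  (2 / Real.sqrt Real.pi) * ∫ x in (0 : ℝ)..t, Real.exp (-x ^ 2)

open Real

theorem hasDerivAt_erf (x : ℝ) : HasDerivAt erf (2 / √π * exp (-x ^ 2)) x := by
  have hcont : Continuous fun x : ℝ => exp (-x ^ 2) := by fun_prop
  exact (intervalIntegral.integral_hasDerivAt_right (hcont.intervalIntegrable _ _)
    (hcont.stronglyMeasurableAtFilter _ _) hcont.continuousAt).const_mul _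

theorem hasDerivAt_erf_div_sqrt_two (x : ℝ) :
    HasDerivAt (fun x => erf (x / √2)) (√(2 / π) * exp (-x ^ 2 / 2)) x := by
  refine ((hasDerivAt_erf (x / √2)).comp x ((hasDerivAt_id x).div_const √2)).congr_deriv ?_
  have hsqrt_two : 0 < √2 := by positivity
  rw [div_pow, sq_sqrt zero_le_two, sqrt_div zero_le_two, neg_div]
  field_simp
  rw [sq_sqrt zero_le_two]

theorem hasDerivAt_exp_neg_sq_div_two (x : ℝ) :
    HasDerivAt (fun x => exp (-x ^ 2 / 2)) (-x * exp (-x ^ 2 / 2)) x := by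
  have hexponent : HasDerivAt (fun x : ℝ => -x ^ 2 / 2) (-x) x :=
    ((hasDerivAt_pow 2 x).neg.div_const 2).congr_deriv (by push_cast; ring)
  exact hexponent.exp.congr_deriv (mul_comm _ _)

theorem sqrt_two_div_pi_mul_sqrt_pi_div_two : √(2 / π) * √(π / 2) = 1 := by
  rw [← sqrt_mul (by positivity), div_mul_div_comm, mul_comm 2 π,
    div_self (by positivity), sqrt_one]

/-- The exact solution of the system `u_t = −u + (t+1)v`, `v_t = u − tv`
with initial conditions `u(0) = v(0) = 1`, expressed via the error function. -/
theorem linear_system_exact_solution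
    (c k : ℝ)
    (hc : c = Real.sqrt (Real.pi / 2) * Real.exp (1 / 2))
    (hk : k = 1 - c * erf (1 / Real.sqrt 2))
    (u v : ℝ → ℝ)
    (hu : ∀ t, u t = Real.sqrt (2 / Real.pi) * c * Real.exp (-(t + 1) ^ 2 / 2)
        + c * t * erf ((t + 1) / Real.sqrt 2) + k * t)
    (hv : ∀ t, v t = c * erf ((t + 1) / Real.sqrt 2) + k) :
    Differentiable ℝ u ∧ Differentiable ℝ v ∧
    (∀ t, deriv u t = -u t + (t + 1) * v t) ∧
    (∀ t, deriv v t = u t - t * v t) ∧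
    u 0 = 1 ∧ v 0 = 1 := by
  set G : ℝ → ℝ := fun t => √(2 / π) * exp (-(t + 1) ^ 2 / 2)
  have hG : ∀ t, HasDerivAt G (-(t + 1) * G t) t := fun t =>
    (((hasDerivAt_exp_neg_sq_div_two (t + 1)).comp_add_const t 1).const_mul
      √(2 / π)).congr_deriv (by ring)
  have hv' : ∀ t, HasDerivAt v (c * G t) t := fun t => by
    rw [funext hv]
    exact (((hasDerivAt_erf_div_sqrt_two (t + 1)).comp_add_const t 1).const_mul c).add_const k
  have hu_eq : u = fun t => c * G t + t * v t := by
    funext t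
    rw [hu, hv]
    ring
  have hu' : ∀ t, HasDerivAt u (-u t + (t + 1) * v t) t := fun t => by
    rw [hu_eq]
    exact (((hG t).const_mul c).add ((hasDerivAt_id' t).mul (hv' t))).congr_deriv (by ring)
  refine ⟨fun t => (hu' t).differentiableAt, fun t => (hv' t).differentiableAt,
    fun t => (hu' t).deriv, fun t => ?_, ?_, ?_⟩
  · rw [(hv' t).deriv, hu_eq]
    ring
  · rw [hu, hc, ← mul_assoc, sqrt_two_div_pi_mul_sqrt_pi_div_two, one_mul, mul_assoc,
      ← exp_add]
    norm_num
  · rw [hv, hk]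
    norm_num
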